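/- Let D be a closed piecewise linear cycle in the plane whose turning number d satisfies d ≥ 1. Then the number of right turns of D is at least 2d + 1. -/

import Mathlib

open Complex Real Finset

/-- A closed piecewise linear cycle in the plane `ℝ² ≅ ℂ`, given by its cyclically
indexed list of vertices.  Consecutive vertices are distinct and the path never
reverses direction (exterior angle `≠ π`). -/
structure PLCycle where
  n : ℕ
  three_le : 3 ≤ n
  v : ZMod n → ℂ
  consecutive_ne : ∀ i : ZMod n, v (i + 1) ≠ v i
  no_reversal : ∀ i : ZMod n,
    Complex.arg ((v (i + 2) - v (i + 1)) / (v (i + 1) - v i)) ≠ Real.pi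

namespace PLCycle

instance instNeZero (C : PLCycle) : NeZero C.n := ⟨by have := C.three_le; omega⟩

/-- The signed exterior angle of the cycle at the vertex `v (i+1)`
(negative at right turns, positive at left turns). -/
noncomputable def turn (C : PLCycle) (i : ZMod C.n) : ℝ :=
  Complex.arg ((C.v (i + 2) - C.v (i + 1)) / (C.v (i + 1) - C.v i))

/-- The turning number, normalized so that a convex polygon traversed clockwise
(all right turns) has turning number `1`. -/
noncomputable def turningNumber (C : PLCycle) : ℝ :=
  -(∑ i : ZMod C.n, C.turn i) / (2 * Real.pi)

/-- `i` indexes a right turn. -/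
def IsRightTurn (C : PLCycle) (i : ZMod C.n) : Prop := C.turn i < 0

/-- `i` indexes a left turn. -/
def IsLeftTurn (C : PLCycle) (i : ZMod C.n) : Prop := 0 < C.turn i

/-- The number of right turns of the cycle. -/
noncomputable def rightTurns (C : PLCycle) : ℕ :=
  letI := Classical.decPred (C.IsRightTurn)
  (Finset.univ.filter C.IsRightTurn).card

/-- The sum of the oriented (interior) angles at the right turns of the cycle. -/
noncomputable def Ro (C : PLCycle) : ℝ :=
  letI := Classical.decPred (C.IsRightTurn)
  ∑ i ∈ Finset.univ.filter C.IsRightTurn, (Real.pi + C.turn i)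

/-- The sum of the oriented (interior) angles at the left turns of the cycle. -/
noncomputable def Lo (C : PLCycle) : ℝ :=
  letI := Classical.decPred (C.IsLeftTurn)
  ∑ i ∈ Finset.univ.filter C.IsLeftTurn, (Real.pi - C.turn i)

/-- The point `p` lies on (the image of) the cycle. -/
def onCycle (C : PLCycle) (p : ℂ) : Prop :=
  ∃ i : ZMod C.n, p ∈ segment ℝ (C.v i) (C.v (i + 1))

/-- The winding number of the cycle around a point `p` not on the cycle. -/
noncomputable def winding (C : PLCycle) (p : ℂ) : ℝ :=
  (∑ i : ZMod C.n, Complex.arg ((C.v (i + 1) - p) / (C.v i - p))) / (2 * Real.pi)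

end PLCycle

/-
Every exterior angle lies in `(-π, π]`, so each right turn contributes less than `π` to the total
clockwise rotation `2πd`, while left turns contribute nothing positive. Hence `2πd < r π`, i.e.
`r > 2d`; the strictness is what yields `2d + 1`.
-/

theorem Finset.sum_lt_card_filter_pos_mul {ι : Type*} (s : Finset ι) (f : ι → ℝ) (c : ℝ)
    (hlt : ∀ i ∈ s, f i < c) (hpos : 0 < ∑ i ∈ s, f i) :
    ∑ i ∈ s, f i < #(s.filter (0 < f ·)) * c := by
  have hsplit := sum_filter_add_sum_filter_not s (0 < f ·) f
  have hnonpos : ∑ i ∈ s.filter (¬ 0 < f ·), f i ≤ 0 :=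
    sum_nonpos fun i hi => not_lt.mp (mem_filter.mp hi).2
  have hne : (s.filter (0 < f ·)).Nonempty := by
    by_contra hempty
    rw [not_nonempty_iff_eq_empty.mp hempty, sum_empty] at hsplit
    linarith
  have hbound : ∑ i ∈ s.filter (0 < f ·), f i < #(s.filter (0 < f ·)) * c := by
    simpa using sum_lt_sum_of_nonempty hne fun i hi => hlt i (mem_filter.mp hi).1
  linarith

namespace PLCycle

theorem neg_pi_lt_turn (C : PLCycle) (i : ZMod C.n) : -π < C.turn i :=
  neg_pi_lt_arg _

theorem sum_neg_turn (C : PLCycle) : ∑ i, -C.turn i = 2 * π * C.turningNumber := by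
  rw [turningNumber, sum_neg_distrib]
  field_simp [pi_ne_zero]

theorem rightTurns_eq_card (C : PLCycle) [DecidablePred fun i => 0 < -C.turn i] :
    C.rightTurns = #(univ.filter fun i => 0 < -C.turn i) := by
  simp only [rightTurns, IsRightTurn, neg_pos]
  congr

end PLCycle

/-- A closed piecewise linear cycle in the plane whose turning number
`d` satisfies `d ≥ 1` has at least `2d + 1` right turns. -/
theorem stmt_0 (D : PLCycle) (d : ℤ) (hd : 1 ≤ d)
    (htn : D.turningNumber = d) :
    2 * d + 1 ≤ (D.rightTurns : ℤ) := by
  classical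
  have hsum : ∑ i, -D.turn i = 2 * π * d := by rw [D.sum_neg_turn, htn]
  have hpos : 0 < ∑ i, -D.turn i := by
    rw [hsum]
    have : (0 : ℝ) < d := by exact_mod_cast hd
    positivity
  have hbound := sum_lt_card_filter_pos_mul univ (fun i => -D.turn i) π
    (fun i _ => by linarith [D.neg_pi_lt_turn i]) hpos
  rw [hsum, ← D.rightTurns_eq_card] at hbound
  have : ((2 * d : ℤ) : ℝ) < D.rightTurns :=
    lt_of_mul_lt_mul_right (by push_cast; linarith) pi_pos.le
  have : 2 * d < D.rightTurns := by exact_mod_cast this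
  omega
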